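/- Let I be a set, let F be a proper filter on I, let n ∈ ℕ, let ε ∈ [0,1], and for each k ∈ {0,1,...,n} let y_k : I → [0,1] be a function and C_k : [0,1] → [0,1] be an increasing connective. Suppose that the set { i ∈ I : min( C_0(y_0(i)), C_1(1 − y_1(i)), ..., C_n(1 − y_n(i)) ) ≤ ε } belongs to F. Then min( C_0(limsup_F y_0), C_1(1 − limsup_F y_1), ..., C_n(1 − limsup_F y_n) ) ≤ ε. -/
import Mathlib


open Filter

/-- `limsupF F g = inf_{J ∈ F} sup_{i ∈ J} g i`. -/
noncomputable def limsupF {I : Type*} (F : Filter I) (g : I → ℝ) : ℝ :=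
  ⨅ J : F.sets, ⨆ i : (J : Set I), g i.1

lemma bddAbove_range_sub {I : Type*} {g : I → ℝ} (hg : ∀ i, g i ∈ Set.Icc (0:ℝ) 1)
    (J : Set I) : BddAbove (Set.range fun i : J => g i.1) := by
  refine ⟨1, ?_⟩
  rintro x ⟨i, rfl⟩
  exact (hg i.1).2

lemma sup_mem_Icc {I : Type*} {g : I → ℝ} (hg : ∀ i, g i ∈ Set.Icc (0:ℝ) 1)
    {J : Set I} (hJ : J.Nonempty) : (⨆ i : J, g i.1) ∈ Set.Icc (0:ℝ) 1 := by
  obtain ⟨i, hi⟩ := hJ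
  haveI : Nonempty J := ⟨⟨i, hi⟩⟩
  constructor
  · exact le_trans (hg i).1 (le_ciSup (bddAbove_range_sub hg J) ⟨i, hi⟩)
  · exact ciSup_le fun j => (hg j.1).2

lemma bddBelow_range_sups {I : Type*} {F : Filter I} (hF : F.NeBot) {g : I → ℝ}
    (hg : ∀ i, g i ∈ Set.Icc (0:ℝ) 1) :
    BddBelow (Set.range fun J : F.sets => ⨆ i : (J : Set I), g i.1) := by
  refine ⟨0, ?_⟩
  rintro x ⟨J, rfl⟩
  exact (sup_mem_Icc hg (F.nonempty_of_mem J.2)).1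

lemma limsupF_mem_Icc {I : Type*} {F : Filter I} (hF : F.NeBot) {g : I → ℝ}
    (hg : ∀ i, g i ∈ Set.Icc (0:ℝ) 1) : limsupF F g ∈ Set.Icc (0:ℝ) 1 := by
  have hne : Nonempty F.sets := ⟨⟨Set.univ, univ_mem⟩⟩
  constructor
  · exact le_ciInf fun J => (sup_mem_Icc hg (F.nonempty_of_mem J.2)).1
  · refine le_trans (ciInf_le (bddBelow_range_sups hF hg) ⟨Set.univ, univ_mem⟩) ?_
    exact (sup_mem_Icc hg (F.nonempty_of_mem univ_mem)).2

/-- If `F` is a proper filter on `I`, `ε ∈ [0,1]`, `y_0, …, y_n : I → [0,1]`, and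
`C_0, …, C_n` are increasing connectives (continuous monotone maps of `[0,1]` to itself)
such that `{ i | min(C_0(y_0 i), C_1(1 - y_1 i), …, C_n(1 - y_n i)) ≤ ε } ∈ F`, then
`min(C_0(limsup_F y_0), C_1(1 - limsup_F y_1), …, C_n(1 - limsup_F y_n)) ≤ ε`. -/
theorem stmt_5 {I : Type*} (F : Filter I) (hF : F.NeBot) (n : ℕ)
    (ε : ℝ) (hε : ε ∈ Set.Icc (0 : ℝ) 1)
    (y : Fin (n + 1) → I → ℝ) (hy : ∀ k i, y k i ∈ Set.Icc (0 : ℝ) 1)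
    (C : Fin (n + 1) → ℝ → ℝ)
    (hmono : ∀ k, MonotoneOn (C k) (Set.Icc (0 : ℝ) 1))
    (hcont : ∀ k, ContinuousOn (C k) (Set.Icc (0 : ℝ) 1))
    (hmaps : ∀ k, Set.MapsTo (C k) (Set.Icc (0 : ℝ) 1) (Set.Icc (0 : ℝ) 1))
    (h : {i : I | (⨅ k : Fin (n + 1), C k (if k = 0 then y k i else 1 - y k i)) ≤ ε} ∈ F) :
    (⨅ k : Fin (n + 1),
        C k (if k = 0 then limsupF F (y k) else 1 - limsupF F (y k))) ≤ ε := by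
  by_contra hcon
  push_neg at hcon
  set t : Fin (n + 1) → ℝ := fun k => if k = 0 then limsupF F (y k) else 1 - limsupF F (y k)
    with ht
  have hL : ∀ k, limsupF F (y k) ∈ Set.Icc (0:ℝ) 1 := fun k => limsupF_mem_Icc hF (hy k)
  have htIcc : ∀ k, t k ∈ Set.Icc (0:ℝ) 1 := by
    intro k
    by_cases hk : k = 0
    · simpa [ht, hk] using hL 0
    · have h1 := (hL k).1
      have h2 := (hL k).2
      simp only [ht, if_neg hk]
      constructor <;> linarith
  have hlt : ∀ k, ε < C k (t k) := by
    intro k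
    refine lt_of_lt_of_le hcon (ciInf_le ?_ k)
    exact Set.Finite.bddBelow (Set.finite_range _)
  -- continuity: find δ k
  have hδ : ∀ k, ∃ δ > 0, ∀ x ∈ Set.Icc (0:ℝ) 1, dist x (t k) < δ → ε < C k x := by
    intro k
    have hc : ContinuousWithinAt (C k) (Set.Icc (0:ℝ) 1) (t k) := (hcont k) (t k) (htIcc k)
    have hmem : (C k) ⁻¹' (Set.Ioi ε) ∈ nhdsWithin (t k) (Set.Icc (0:ℝ) 1) :=
      hc (Ioi_mem_nhds (hlt k))
    rw [Metric.mem_nhdsWithin_iff] at hmem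
    obtain ⟨δ, hδ0, hδ⟩ := hmem
    exact ⟨δ, hδ0, fun x hx hdist => hδ ⟨Metric.mem_ball.2 hdist, hx⟩⟩
  choose δ hδ0 hδ using hδ
  -- uniform δ
  obtain ⟨d, hd0, hd⟩ : ∃ d > 0, ∀ k, d ≤ δ k := by
    refine ⟨Finset.univ.inf' ⟨0, Finset.mem_univ 0⟩ δ, ?_,
      fun k => Finset.inf'_le δ (Finset.mem_univ k)⟩
    exact (Finset.lt_inf'_iff _).2 fun k _ => hδ0 k
  -- choose sets J k where sup < L_k + d/2
  have hJk : ∀ k, ∃ J : F.sets, (⨆ i : (J : Set I), y k i.1) < limsupF F (y k) + d / 2 := by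
    intro k
    have : limsupF F (y k) < limsupF F (y k) + d / 2 := by linarith
    exact exists_lt_of_ciInf_lt this
  choose Jk hJk using hJk
  -- the combined set
  have hJF : ({i : I | (⨅ k : Fin (n + 1), C k (if k = 0 then y k i else 1 - y k i)) ≤ ε}
      ∩ ⋂ k, ((Jk k : Set I))) ∈ F :=
    inter_mem h (iInter_mem.2 fun k => (Jk k).2)
  set JJ : F.sets := ⟨_, hJF⟩ with hJJ
  -- L_0 ≤ sup over this set
  have hL0 : limsupF F (y 0) ≤ ⨆ i : (JJ : Set I), y 0 i.1 :=
    ciInf_le (bddBelow_range_sups hF (hy 0)) JJ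
  have hlt0 : limsupF F (y 0) - d / 2 < ⨆ i : (JJ : Set I), y 0 i.1 := by
    refine lt_of_lt_of_le ?_ hL0; linarith
  haveI : Nonempty (JJ : Set I) := (F.nonempty_of_mem hJF).to_subtype
  obtain ⟨i, hi⟩ := exists_lt_of_lt_ciSup hlt0
  have hiS : (i : I) ∈
      {i : I | (⨅ k : Fin (n + 1), C k (if k = 0 then y k i else 1 - y k i)) ≤ ε} := i.2.1
  have hiJ : ∀ k, (i : I) ∈ (Jk k : Set I) := by
    have h2 := i.2.2
    simpa [Set.mem_iInter] using h2
  -- for each k, the argument is ≥ p k and then C k of it > ε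
  have key : ∀ k, ε < C k (if k = 0 then y k (i : I) else 1 - y k (i : I)) := by
    intro k
    set p : ℝ := max 0 (t k - d / 2) with hp
    have hpIcc : p ∈ Set.Icc (0:ℝ) 1 := by
      constructor
      · exact le_max_left _ _
      · exact max_le (by norm_num) (by linarith [(htIcc k).2, hd0])
    have hdist : dist p (t k) < δ k := by
      rw [Real.dist_eq, abs_lt]
      have h1 : t k - d / 2 ≤ p := le_max_right _ _
      have h2 : p ≤ t k := max_le (htIcc k).1 (by linarith)
      have h3 := hd k
      constructor <;> linarith [hδ0 k]
    have hCp : ε < C k p := hδ k p hpIcc hdist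
    have haIcc : (if k = 0 then y k (i : I) else 1 - y k (i : I)) ∈ Set.Icc (0:ℝ) 1 := by
      by_cases hk : k = 0
      · simpa [hk] using hy 0 i
      · have h1 := (hy k (i : I)).1
        have h2 := (hy k (i : I)).2
        simp only [if_neg hk]
        constructor <;> linarith
    have hpa : p ≤ (if k = 0 then y k (i : I) else 1 - y k (i : I)) := by
      by_cases hk : k = 0
      · subst hk
        rw [if_pos rfl]
        refine max_le (hy 0 i).1 ?_
        have ht0 : t 0 = limsupF F (y 0) := by simp [ht]
        rw [ht0]
        linarith
      · have hyk : y k (i : I) ≤ ⨆ j : ((Jk k : F.sets) : Set I), y k j.1 :=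
          le_ciSup (bddAbove_range_sub (hy k) _) ⟨(i : I), hiJ k⟩
        have hsup := hJk k
        simp only [if_neg hk]
        refine max_le (by linarith [(hy k (i : I)).2]) ?_
        simp only [ht, if_neg hk]
        linarith
    calc ε < C k p := hCp
    _ ≤ C k _ := hmono k hpIcc haIcc hpa
  -- contradiction with hiS
  obtain ⟨k0, hk0⟩ : ∃ k0 : Fin (n + 1), ∀ j : Fin (n + 1),
      C k0 (if k0 = 0 then y k0 (i : I) else 1 - y k0 (i : I)) ≤
      C j (if j = 0 then y j (i : I) else 1 - y j (i : I)) :=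
    Finite.exists_min _
  have hinf : C k0 (if k0 = 0 then y k0 (i : I) else 1 - y k0 (i : I)) ≤ ε :=
    le_trans (le_ciInf hk0) hiS
  exact absurd hinf (not_le.2 (key k0))
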